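/- Let μ be a Borel probability measure on [0,1]^d such that μ(Q_w) > 0 for every word w and μ assigns zero measure to the topological boundary of every dyadic cube Q_w. Then for all 0 < δ' < δ, h(μ,δ') ≤ liminf_{m→∞} (log₂ h_{m,δ}(μ))/m. In particular, dim_qL μ ≤ inf_{δ>0} liminf_{m→∞} (log₂ h_{m,δ}(μ))/m, so if inf_{δ>0} liminf_{m→∞} (log₂ h_{m,δ}(μ))/m = 0 then dim_qL μ = 0. -/

import Mathlib

/-!
Let `c` be the centre of `Q_ω`, `n = |ω|`, `R = 2^{-(n+1)}` and `r = 2^{-(n+m)}`. The ball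
`B(c,R)` lies in the closure of `Q_ω`, which has the mass of `Q_ω` because the boundary is null,
while for a central word `w` of length `m` the cube `Q_{ωw}` is one of the cubes of generation
`n+m` having `c` as a vertex, so it lies in `B(c,r)`. The same applies to `w = 10⋯0`, which puts
`c` in the support. Hence `μ(Q_ω)/μ(Q_{ωw}) ≥ μ(B(c,R))/μ(B(c,r)) ≥ C 2^{(m-1)s}` for every
exponent `s` admissible in `h(μ,δ')`, provided `r < R^{1+δ'}`; for `n = ⌊m/δ⌋` this holds once
`m` is large, because `δ' < δ`. Taking `log₂` and dividing by `m` gives `s ≤ liminf`.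
-/

open MeasureTheory Filter Set
open scoped ENNReal NNReal

/-- The alphabet `Λ = {0,1}^d`, identified with `{0,…,2^d−1}`. -/
abbrev Lam (d : ℕ) := Fin d → Bool

/-- Finite words over the alphabet `Λ` (including the empty word). -/
abbrev Wd (d : ℕ) := List (Lam d)

/-- A word `w = w_1⋯w_m` is central if for each coordinate `i` the digit string
`(w_1(i),…,w_m(i))` equals `(0,1,1,…,1)` or `(1,0,0,…,0)`. -/
def IsCentral (d : ℕ) (w : Wd d) : Prop :=
  ∀ i : Fin d, ∃ b : Bool, w.map (fun a => a i) = b :: List.replicate (w.length - 1) (!b)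

/-- The lower corner of the dyadic cube of the word `w`: `a_i = Σ_j w_j(i) 2^{−j}`. -/
noncomputable def dyadicA (d : ℕ) (w : Wd d) (i : Fin d) : ℝ :=
  ∑ j : Fin w.length, (if w.get j i then ((2 : ℝ) ^ (j.val + 1))⁻¹ else 0)

/-- The dyadic cube `Q_w ⊆ [0,1]^d` of generation `|w|`: product of the intervals
`[a_i, a_i + 2^{−k})`, taken as `[a_i, 1]` when `a_i + 2^{−k} = 1`. -/
noncomputable def Qcube (d : ℕ) (w : Wd d) : Set (Fin d → ℝ) :=
  {y | ∀ i, dyadicA d w i ≤ y i ∧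
       (y i < dyadicA d w i + ((2 : ℝ) ^ w.length)⁻¹ ∨
        (dyadicA d w i + ((2 : ℝ) ^ w.length)⁻¹ = 1 ∧ y i ≤ 1))}

/-- The support of a measure on `ℝ^d`: points all of whose closed balls have positive measure. -/
def msupport (d : ℕ) (μ : Measure (Fin d → ℝ)) : Set (Fin d → ℝ) :=
  {x | ∀ r : ℝ, 0 < r → 0 < μ (Metric.closedBall x r)}

/-- `h(μ,δ)`: the supremum of exponents `s` admissible for the lower (quasi-)Assouad condition. -/
noncomputable def hfun (d : ℕ) (μ : Measure (Fin d → ℝ)) (δ : ℝ) : ℝ≥0∞ :=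
  ⨆ (s : ℝ) (_ : ∃ C : ℝ, 0 < C ∧ ∀ x ∈ msupport d μ, ∀ r R : ℝ,
      0 < r → r < R ^ (1 + δ) → R ^ (1 + δ) < R → R < 1 →
      ENNReal.ofReal (C * (R / r) ^ s) ≤ μ (Metric.closedBall x R) / μ (Metric.closedBall x r)),
    ENNReal.ofReal s

/-- The lower quasi-Assouad dimension `dim_qL μ = lim_{δ→0+} h(μ,δ) = inf_{δ>0} h(μ,δ)`. -/
noncomputable def dimqL (d : ℕ) (μ : Measure (Fin d → ℝ)) : ℝ≥0∞ :=
  ⨅ (δ : ℝ) (_ : 0 < δ), hfun d μ δ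

/-- `h_{m,δ}(μ)`: min over words `ω` of length `⌊m/δ⌋` of the min over central words `w`
of length `m` of `μ(Q_ω)/μ(Q_{ωw})`. -/
noncomputable def hmdMeas (d : ℕ) (μ : Measure (Fin d → ℝ)) (δ : ℝ) (m : ℕ) : ℝ≥0∞ :=
  ⨅ (ω : Wd d) (_ : ω.length = ⌊(m : ℝ) / δ⌋₊),
    ⨅ (w : Wd d) (_ : w.length = m ∧ IsCentral d w), μ (Qcube d ω) / μ (Qcube d (ω ++ w))

/-- Base-2 logarithm on `ℝ≥0∞` (with `log₂ ∞ = ∞`). -/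
noncomputable def log2 (y : ℝ≥0∞) : ℝ≥0∞ :=
  if y = ⊤ then ⊤ else ENNReal.ofReal (Real.logb 2 y.toReal)

noncomputable def binaryValue : List Bool → ℝ
  | [] => 0
  | b :: l => (if b then 2⁻¹ else 0) + 2⁻¹ * binaryValue l

lemma binaryValue_replicate_false (k : ℕ) : binaryValue (List.replicate k false) = 0 := by
  induction k with
  | zero => rfl
  | succ k ih => simp [List.replicate_succ, binaryValue, ih]

lemma binaryValue_replicate_true (k : ℕ) :
    binaryValue (List.replicate k true) = 1 - ((2 : ℝ) ^ k)⁻¹ := by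
  induction k with
  | zero => simp [binaryValue]
  | succ k ih =>
    rw [List.replicate_succ, binaryValue, ih, pow_succ, mul_inv, if_pos rfl]
    ring

lemma binaryValue_central (b : Bool) (k : ℕ) :
    binaryValue (b :: List.replicate k (!b)) = 2⁻¹ - if b then 0 else ((2 : ℝ) ^ (k + 1))⁻¹ := by
  cases b
  · simp only [binaryValue, Bool.not_false, binaryValue_replicate_true, pow_succ, mul_inv]
    norm_num
    ring
  · simp [binaryValue, binaryValue_replicate_false]

lemma dyadicA_cons (d : ℕ) (b : Lam d) (l : Wd d) (i : Fin d) :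
    dyadicA d (b :: l) i = (if b i then 2⁻¹ else 0) + 2⁻¹ * dyadicA d l i := by
  change (∑ j : Fin (l.length + 1), if (b :: l).get j i then ((2 : ℝ) ^ (j.val + 1))⁻¹ else 0) = _
  rw [Fin.sum_univ_succ, dyadicA, Finset.mul_sum]
  simp only [List.get_eq_getElem, List.getElem_cons_succ, Fin.val_succ, Fin.val_zero, pow_succ,
    mul_inv, mul_ite, mul_zero]
  congr 1
  · norm_num
    rfl
  · exact Finset.sum_congr rfl fun j _ => by split_ifs <;> ring

lemma dyadicA_eq_binaryValue (d : ℕ) (w : Wd d) (i : Fin d) :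
    dyadicA d w i = binaryValue (w.map (· i)) := by
  induction w with
  | nil => simp [dyadicA, binaryValue]
  | cons b l ih => rw [dyadicA_cons, List.map_cons, binaryValue, ih]

lemma dyadicA_append (d : ℕ) (ω w : Wd d) (i : Fin d) :
    dyadicA d (ω ++ w) i = dyadicA d ω i + ((2 : ℝ) ^ ω.length)⁻¹ * dyadicA d w i := by
  induction ω with
  | nil => simp [dyadicA]
  | cons a l ih =>
    rw [List.cons_append, dyadicA_cons, dyadicA_cons, ih, List.length_cons, pow_succ, mul_inv]
    ring

lemma dyadicA_append_central {d : ℕ} (ω : Wd d) {w : Wd d} (hw : IsCentral d w)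
    (hw₁ : 1 ≤ w.length) (i : Fin d) : ∃ b : Bool, dyadicA d (ω ++ w) i =
      dyadicA d ω i + ((2 : ℝ) ^ (ω.length + 1))⁻¹ -
        if b then 0 else ((2 : ℝ) ^ (ω.length + w.length))⁻¹ := by
  obtain ⟨b, hb⟩ := hw i
  obtain ⟨k, hk⟩ : ∃ k, w.length = k + 1 := ⟨w.length - 1, by omega⟩
  rw [hk, Nat.add_sub_cancel] at hb
  refine ⟨b, ?_⟩
  rw [dyadicA_append, dyadicA_eq_binaryValue d w, hb, binaryValue_central, hk]
  cases b <;> simp only [pow_add, pow_succ, mul_inv] <;> norm_num; ring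

noncomputable def cubeCenter (d : ℕ) (ω : Wd d) : Fin d → ℝ :=
  fun i => dyadicA d ω i + ((2 : ℝ) ^ (ω.length + 1))⁻¹

lemma inv_two_pow_succ_add_self (n : ℕ) :
    ((2 : ℝ) ^ (n + 1))⁻¹ + ((2 : ℝ) ^ (n + 1))⁻¹ = ((2 : ℝ) ^ n)⁻¹ := by
  rw [pow_succ, mul_inv]; ring

lemma ball_cubeCenter_subset_Qcube (d : ℕ) (ω : Wd d) :
    Metric.ball (cubeCenter d ω) ((2 : ℝ) ^ (ω.length + 1))⁻¹ ⊆ Qcube d ω := by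
  intro y hy i
  rw [mem_ball_iff_norm, pi_norm_lt_iff (by positivity)] at hy
  have hi := abs_lt.mp (hy i)
  have := inv_two_pow_succ_add_self ω.length
  simp only [Pi.sub_apply, cubeCenter] at hi
  exact ⟨by linarith, Or.inl (by linarith)⟩

lemma measure_closedBall_cubeCenter_le {d : ℕ} (μ : Measure (Fin d → ℝ)) {ω : Wd d}
    (hbdry : μ (frontier (Qcube d ω)) = 0) :
    μ (Metric.closedBall (cubeCenter d ω) ((2 : ℝ) ^ (ω.length + 1))⁻¹) ≤ μ (Qcube d ω) :=
  calc μ (Metric.closedBall (cubeCenter d ω) ((2 : ℝ) ^ (ω.length + 1))⁻¹)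
      = μ (closure (Metric.ball (cubeCenter d ω) ((2 : ℝ) ^ (ω.length + 1))⁻¹)) := by
        rw [closure_ball _ (by positivity)]
    _ ≤ μ (closure (Qcube d ω)) := measure_mono (closure_mono (ball_cubeCenter_subset_Qcube d ω))
    _ = μ (Qcube d ω) := measure_closure_of_null_frontier hbdry

lemma Qcube_subset_closedBall {d : ℕ} {w : Wd d} {x : Fin d → ℝ} {r : ℝ} (hr : 0 ≤ r)
    (h : ∀ i, x i - r ≤ dyadicA d w i ∧ dyadicA d w i + ((2 : ℝ) ^ w.length)⁻¹ ≤ x i + r) :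
    Qcube d w ⊆ Metric.closedBall x r := by
  intro y hy
  rw [Metric.mem_closedBall, dist_pi_le_iff hr]
  intro i
  have hyi : y i ≤ dyadicA d w i + ((2 : ℝ) ^ w.length)⁻¹ := by
    rcases (hy i).2 with h' | ⟨h', h''⟩
    · exact h'.le
    · exact h' ▸ h''
  rw [Real.dist_eq, abs_le]
  constructor <;> linarith [(hy i).1, h i]

lemma Qcube_append_central_subset {d : ℕ} (ω : Wd d) {w : Wd d} (hw : IsCentral d w)
    (hw₁ : 1 ≤ w.length) :
    Qcube d (ω ++ w) ⊆
      Metric.closedBall (cubeCenter d ω) ((2 : ℝ) ^ (ω.length + w.length))⁻¹ := by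
  refine Qcube_subset_closedBall (by positivity) fun i => ?_
  obtain ⟨b, hb⟩ := dyadicA_append_central ω hw hw₁ i
  have : (0 : ℝ) < ((2 : ℝ) ^ (ω.length + w.length))⁻¹ := by positivity
  rw [hb, List.length_append, cubeCenter]
  cases b <;> simp only [if_true, Bool.false_eq_true, if_false] <;> constructor <;> linarith

lemma cubeCenter_mem_msupport {d : ℕ} {μ : Measure (Fin d → ℝ)}
    (hpos : ∀ w : Wd d, 0 < μ (Qcube d w)) (ω : Wd d) : cubeCenter d ω ∈ msupport d μ := by
  intro r hr
  obtain ⟨k, hk⟩ := exists_pow_lt_of_lt_one hr (by norm_num : (2 : ℝ)⁻¹ < 1)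
  set u : Wd d := (fun _ => true) :: List.replicate k (fun _ => false)
  have hu : IsCentral d u := fun i => ⟨true, by simp [u]⟩
  have hul : u.length = k + 1 := by simp [u]
  have hrad : ((2 : ℝ) ^ (ω.length + u.length))⁻¹ ≤ r := by
    refine le_trans ?_ hk.le
    rw [← inv_pow]
    exact pow_le_pow_of_le_one (by norm_num) (by norm_num) (by omega)
  calc 0 < μ (Qcube d (ω ++ u)) := hpos _
    _ ≤ μ (Metric.closedBall (cubeCenter d ω) r) := measure_mono <|
        (Qcube_append_central_subset ω hu (by omega)).trans
          (Metric.closedBall_subset_closedBall hrad)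

def LowerAssouadBound (d : ℕ) (μ : Measure (Fin d → ℝ)) (δ C s : ℝ) : Prop :=
  ∀ x ∈ msupport d μ, ∀ r R : ℝ, 0 < r → r < R ^ (1 + δ) → R ^ (1 + δ) < R → R < 1 →
    ENNReal.ofReal (C * (R / r) ^ s) ≤ μ (Metric.closedBall x R) / μ (Metric.closedBall x r)

lemma inv_two_pow_eq_rpow (k : ℕ) : ((2 : ℝ) ^ k)⁻¹ = (2 : ℝ) ^ (-(k : ℝ)) := by
  rw [Real.rpow_neg zero_le_two, Real.rpow_natCast]

lemma two_rpow_neg_scales {a b δ : ℝ} (ha : 0 < a) (hδ : 0 < δ) (hab : a * (1 + δ) < b) :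
    (2 : ℝ) ^ (-b) < ((2 : ℝ) ^ (-a)) ^ (1 + δ) ∧ ((2 : ℝ) ^ (-a)) ^ (1 + δ) < (2 : ℝ) ^ (-a) ∧
      (2 : ℝ) ^ (-a) < 1 := by
  rw [← Real.rpow_mul zero_le_two]
  refine ⟨?_, ?_, Real.rpow_lt_one_of_one_lt_of_neg one_lt_two (by linarith)⟩ <;>
    rw [Real.rpow_lt_rpow_left_iff one_lt_two] <;> nlinarith

lemma ofReal_le_measure_Qcube_div {d : ℕ} {μ : Measure (Fin d → ℝ)}
    (hpos : ∀ w : Wd d, 0 < μ (Qcube d w)) (hbdry : ∀ w : Wd d, μ (frontier (Qcube d w)) = 0)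
    {δ C s : ℝ} (hδ : 0 < δ) (hμ : LowerAssouadBound d μ δ C s) {ω w : Wd d}
    (hw : IsCentral d w) (hw₁ : 1 ≤ w.length)
    (hscale : ((ω.length : ℝ) + 1) * (1 + δ) < ω.length + w.length) :
    ENNReal.ofReal (C * (2 : ℝ) ^ (((w.length : ℝ) - 1) * s)) ≤
      μ (Qcube d ω) / μ (Qcube d (ω ++ w)) := by
  set n := ω.length
  set m := w.length
  set R : ℝ := ((2 : ℝ) ^ (n + 1))⁻¹ with hR
  set r : ℝ := ((2 : ℝ) ^ (n + m))⁻¹ with hr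
  have hR' : R = (2 : ℝ) ^ (-((n : ℝ) + 1)) := by rw [hR, inv_two_pow_eq_rpow]; push_cast; rfl
  have hr' : r = (2 : ℝ) ^ (-((n : ℝ) + m)) := by rw [hr, inv_two_pow_eq_rpow]; push_cast; rfl
  have hratio : (R / r) ^ s = (2 : ℝ) ^ (((m : ℝ) - 1) * s) := by
    rw [hR', hr', ← Real.rpow_sub zero_lt_two, ← Real.rpow_mul zero_le_two]
    ring_nf
  obtain ⟨h₁, h₂, h₃⟩ := two_rpow_neg_scales (by positivity) hδ hscale
  simp only [← hR', ← hr'] at h₁ h₂ h₃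
  calc ENNReal.ofReal (C * (2 : ℝ) ^ (((m : ℝ) - 1) * s))
      ≤ μ (Metric.closedBall (cubeCenter d ω) R) / μ (Metric.closedBall (cubeCenter d ω) r) := by
        rw [← hratio]
        exact hμ _ (cubeCenter_mem_msupport hpos ω) r R (by positivity) h₁ h₂ h₃
    _ ≤ μ (Qcube d ω) / μ (Qcube d (ω ++ w)) :=
        ENNReal.div_le_div (measure_closedBall_cubeCenter_le μ (hbdry ω))
          (measure_mono (Qcube_append_central_subset ω hw hw₁))

lemma eventually_scale_condition {δ' δ : ℝ} (hδ' : 0 < δ') (hδ'δ : δ' < δ) :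
    ∀ᶠ m : ℕ in atTop, ∀ n : ℕ, (n : ℝ) ≤ m / δ → ((n : ℝ) + 1) * (1 + δ') < n + m := by
  have hδ : 0 < δ := hδ'.trans hδ'δ
  have hθ : 0 < 1 - δ' / δ := by rw [sub_pos, div_lt_one hδ]; exact hδ'δ
  have hgrow : Tendsto (fun m : ℕ => (m : ℝ) * (1 - δ' / δ)) atTop atTop :=
    tendsto_natCast_atTop_atTop.atTop_mul_const hθ
  filter_upwards [hgrow.eventually_gt_atTop (1 + δ')] with m hm n hn
  have hnδ : (n : ℝ) * δ ≤ m := (le_div_iff₀ hδ).mp hn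
  have : (n : ℝ) * δ' ≤ m * (δ' / δ) := by
    rw [mul_div_assoc', le_div_iff₀ hδ]
    nlinarith [mul_le_mul_of_nonneg_left hnδ hδ'.le]
  nlinarith

lemma hmdMeas_eventually_ge {d : ℕ} {μ : Measure (Fin d → ℝ)}
    (hpos : ∀ w : Wd d, 0 < μ (Qcube d w)) (hbdry : ∀ w : Wd d, μ (frontier (Qcube d w)) = 0)
    {δ' δ C s : ℝ} (hδ' : 0 < δ') (hδ'δ : δ' < δ) (hμ : LowerAssouadBound d μ δ' C s) :
    ∀ᶠ m : ℕ in atTop, ENNReal.ofReal (C * (2 : ℝ) ^ (((m : ℝ) - 1) * s)) ≤ hmdMeas d μ δ m := by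
  filter_upwards [eventually_scale_condition hδ' hδ'δ, eventually_ge_atTop 1] with m hscale hm
  refine le_iInf₂ fun ω hω => le_iInf₂ fun w ⟨hwm, hw⟩ => ?_
  subst hwm
  refine ofReal_le_measure_Qcube_div hpos hbdry hδ' hμ hw hm (hscale _ ?_)
  rw [hω]
  exact Nat.floor_le (div_nonneg (Nat.cast_nonneg _) (hδ'.trans hδ'δ).le)

lemma ofReal_logb_le_log2 {t : ℝ} {y : ℝ≥0∞} (ht : 0 < t) (hty : ENNReal.ofReal t ≤ y) :
    ENNReal.ofReal (Real.logb 2 t) ≤ log2 y := by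
  unfold log2
  split_ifs with hy
  · exact le_top
  · have := (ENNReal.ofReal_le_iff_le_toReal hy).mp hty
    exact ENNReal.ofReal_le_ofReal (Real.logb_le_logb_of_le one_lt_two ht this)

lemma ofReal_le_liminf_log2_div {f : ℕ → ℝ≥0∞} {C s : ℝ} (hC : 0 < C)
    (hf : ∀ᶠ m : ℕ in atTop, ENNReal.ofReal (C * (2 : ℝ) ^ (((m : ℝ) - 1) * s)) ≤ f m) :
    ENNReal.ofReal s ≤ liminf (fun m : ℕ => log2 (f m) / m) atTop := by
  set g : ℕ → ℝ := fun m => (Real.logb 2 C + ((m : ℝ) - 1) * s) / m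
  have hg : Tendsto g atTop (nhds s) := by
    have h := ((tendsto_one_div_atTop_nhds_zero_nat (𝕜 := ℝ)).const_mul
      (Real.logb 2 C - s)).add_const s
    rw [mul_zero, zero_add] at h
    refine h.congr' ?_
    filter_upwards [eventually_ge_atTop 1] with m hm
    have : (m : ℝ) ≠ 0 := by positivity
    simp only [g]
    field_simp
    ring
  have hgf : ∀ᶠ m : ℕ in atTop, ENNReal.ofReal (g m) ≤ log2 (f m) / m := by
    filter_upwards [hf, eventually_ge_atTop 1] with m hm hm₁
    have hlog : Real.logb 2 (C * (2 : ℝ) ^ (((m : ℝ) - 1) * s)) =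
        Real.logb 2 C + ((m : ℝ) - 1) * s := by
      rw [Real.logb_mul hC.ne' (by positivity), Real.logb_rpow zero_lt_two one_lt_two.ne']
    rw [ENNReal.ofReal_div_of_pos (by positivity), ENNReal.ofReal_natCast, ← hlog]
    exact ENNReal.div_le_div_right (ofReal_logb_le_log2 (by positivity) hm) _
  calc ENNReal.ofReal s = liminf (fun m => ENNReal.ofReal (g m)) atTop :=
        ((ENNReal.continuous_ofReal.tendsto s).comp hg).liminf_eq.symm
    _ ≤ liminf (fun m : ℕ => log2 (f m) / m) atTop := liminf_le_liminf hgf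

lemma hfun_le_liminf_log2_hmdMeas {d : ℕ} {μ : Measure (Fin d → ℝ)}
    (hpos : ∀ w : Wd d, 0 < μ (Qcube d w)) (hbdry : ∀ w : Wd d, μ (frontier (Qcube d w)) = 0)
    {δ' δ : ℝ} (hδ' : 0 < δ') (hδ'δ : δ' < δ) :
    hfun d μ δ' ≤ liminf (fun m : ℕ => log2 (hmdMeas d μ δ m) / m) atTop :=
  iSup₂_le fun _ ⟨_, hC, hμ⟩ =>
    ofReal_le_liminf_log2_div hC (hmdMeas_eventually_ge hpos hbdry hδ' hδ'δ hμ)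

theorem stmt14_general (d : ℕ) (μ : Measure (Fin d → ℝ))
    (hpos : ∀ w : Wd d, 0 < μ (Qcube d w))
    (hbdry : ∀ w : Wd d, μ (frontier (Qcube d w)) = 0) :
    (∀ δ' δ : ℝ, 0 < δ' → δ' < δ →
      hfun d μ δ' ≤
        Filter.liminf (fun m : ℕ => log2 (hmdMeas d μ δ m) / (m : ℝ≥0∞)) Filter.atTop) ∧
    dimqL d μ ≤ (⨅ (δ : ℝ) (_ : 0 < δ),
      Filter.liminf (fun m : ℕ => log2 (hmdMeas d μ δ m) / (m : ℝ≥0∞)) Filter.atTop) ∧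
    ((⨅ (δ : ℝ) (_ : 0 < δ),
      Filter.liminf (fun m : ℕ => log2 (hmdMeas d μ δ m) / (m : ℝ≥0∞)) Filter.atTop) = 0 →
      dimqL d μ = 0) := by
  have hfun_le : ∀ δ' δ : ℝ, 0 < δ' → δ' < δ → hfun d μ δ' ≤
      liminf (fun m : ℕ => log2 (hmdMeas d μ δ m) / (m : ℝ≥0∞)) atTop :=
    fun _ _ hδ' hδ'δ => hfun_le_liminf_log2_hmdMeas hpos hbdry hδ' hδ'δ
  have hdim : dimqL d μ ≤ ⨅ (δ : ℝ) (_ : 0 < δ),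
      liminf (fun m : ℕ => log2 (hmdMeas d μ δ m) / (m : ℝ≥0∞)) atTop :=
    le_iInf₂ fun δ hδ =>
      (iInf₂_le (δ / 2) (half_pos hδ)).trans (hfun_le _ δ (half_pos hδ) (half_lt_self hδ))
  exact ⟨hfun_le, hdim, fun h => le_antisymm (hdim.trans_eq h) zero_le⟩

/-- For a Borel probability measure `μ` on `[0,1]^d` giving positive mass to
every dyadic cube and zero mass to all their boundaries: for all `0 < δ' < δ`,
`h(μ,δ') ≤ liminf_m (log₂ h_{m,δ}(μ))/m`; in particular
`dim_qL μ ≤ inf_{δ>0} liminf_m (log₂ h_{m,δ}(μ))/m`, so if the right side is `0` then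
`dim_qL μ = 0`. -/
theorem stmt14 (d : ℕ) (hd : 1 ≤ d) (μ : Measure (Fin d → ℝ)) [IsProbabilityMeasure μ]
    (hsupp : μ (Set.Icc (0 : Fin d → ℝ) 1)ᶜ = 0)
    (hpos : ∀ w : Wd d, 0 < μ (Qcube d w))
    (hbdry : ∀ w : Wd d, μ (frontier (Qcube d w)) = 0) :
    (∀ δ' δ : ℝ, 0 < δ' → δ' < δ →
      hfun d μ δ' ≤
        Filter.liminf (fun m : ℕ => log2 (hmdMeas d μ δ m) / (m : ℝ≥0∞)) Filter.atTop) ∧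
    dimqL d μ ≤ (⨅ (δ : ℝ) (_ : 0 < δ),
      Filter.liminf (fun m : ℕ => log2 (hmdMeas d μ δ m) / (m : ℝ≥0∞)) Filter.atTop) ∧
    ((⨅ (δ : ℝ) (_ : 0 < δ),
      Filter.liminf (fun m : ℕ => log2 (hmdMeas d μ δ m) / (m : ℝ≥0∞)) Filter.atTop) = 0 →
      dimqL d μ = 0) :=
  stmt14_general d μ hpos hbdry
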